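/- Let (V1, V2) be a compact normal pair on a complex Hilbert space H, and let f and g be mutually orthogonal vectors in E_1 = ker(C(V1, V2) − I), each an eigenvector of the cross-commutator [V2*, V1]. Then ⟨V2^m f, V1^n g⟩ = 0 for all integers m, n ≥ 0, and the subspaces H_f and H_g are orthogonal, where H_f and H_g denote the closures of the linear spans of {V1^m V2^n f : m, n ≥ 0} and {V1^m V2^n g : m, n ≥ 0} respectively. -/

import Mathlib

open ContinuousLinearMap

section Defs

variable {H : Type*} [NormedAddCommGroup H] [InnerProductSpace ℂ H] [CompleteSpace H]

/-- The defect operator `C(V₁, V₂) = I - V₁V₁* - V₂V₂* + V₁V₂V₁*V₂*` of a pair of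
operators on a complex Hilbert space. -/
noncomputable def defectOp (V₁ V₂ : H →L[ℂ] H) : H →L[ℂ] H :=
  1 - V₁ ∘L adjoint V₁ - V₂ ∘L adjoint V₂ + V₁ ∘L V₂ ∘L adjoint V₁ ∘L adjoint V₂

/-- The cross-commutator `[V₂*, V₁] = V₂*V₁ - V₁V₂*`. -/
noncomputable def crossComm (V₁ V₂ : H →L[ℂ] H) : H →L[ℂ] H :=
  adjoint V₂ ∘L V₁ - V₁ ∘L adjoint V₂

/-- An isometric pair: both operators are isometries and they commute. -/
def IsIsometricPair (V₁ V₂ : H →L[ℂ] H) : Prop :=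
  (∀ x : H, ‖V₁ x‖ = ‖x‖) ∧ (∀ x : H, ‖V₂ x‖ = ‖x‖) ∧ V₁ ∘L V₂ = V₂ ∘L V₁

/-- A shift: an isometry `V` such that `(V*)^n x → 0` for every `x`. -/
def IsShift (V : H →L[ℂ] H) : Prop :=
  (∀ x : H, ‖V x‖ = ‖x‖) ∧
    ∀ x : H, Filter.Tendsto (fun n : ℕ => (adjoint V ^ n) x) Filter.atTop (nhds 0)

/-- A BCL pair: an isometric pair whose product is a shift. -/
def IsBCLPair (V₁ V₂ : H →L[ℂ] H) : Prop :=
  IsIsometricPair V₁ V₂ ∧ IsShift (V₁ ∘L V₂)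

/-- A compact normal pair: a BCL pair whose cross-commutator is compact and normal. -/
def IsCompactNormalPair (V₁ V₂ : H →L[ℂ] H) : Prop :=
  IsBCLPair V₁ V₂ ∧ IsCompactOperator ⇑(crossComm V₁ V₂) ∧
    crossComm V₁ V₂ ∘L adjoint (crossComm V₁ V₂) =
      adjoint (crossComm V₁ V₂) ∘L crossComm V₁ V₂

/-- A subspace reduces the pair `(V₁, V₂)` if it is invariant under `V₁, V₂, V₁*, V₂*`. -/
def ReducesPair (V₁ V₂ : H →L[ℂ] H) (S : Submodule ℂ H) : Prop :=
  (∀ x ∈ S, V₁ x ∈ S) ∧ (∀ x ∈ S, V₂ x ∈ S) ∧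
    (∀ x ∈ S, adjoint V₁ x ∈ S) ∧ (∀ x ∈ S, adjoint V₂ x ∈ S)

/-- A pair is irreducible if its only closed reducing subspaces are `⊥` and `⊤`. -/
def IsIrreduciblePair (V₁ V₂ : H →L[ℂ] H) : Prop :=
  ∀ S : Submodule ℂ H, IsClosed (S : Set H) → ReducesPair V₁ V₂ S → S = ⊥ ∨ S = ⊤

/-- An `n`-finite pair: a compact normal pair whose defect operator has `n`-dimensional
range. -/
def IsNFinitePair (n : ℕ) (V₁ V₂ : H →L[ℂ] H) : Prop :=
  IsCompactNormalPair V₁ V₂ ∧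
    Module.rank ℂ (LinearMap.range (defectOp V₁ V₂ : H →ₗ[ℂ] H)) = n

end Defs

section Aux

set_option linter.unusedSectionVars false

local notation "⟪" x ", " y "⟫" => @inner ℂ _ _ x y

variable {H : Type*} [NormedAddCommGroup H] [InnerProductSpace ℂ H] [CompleteSpace H]

lemma aux_inner_map {V : H →L[ℂ] H} (h : ∀ x, ‖V x‖ = ‖x‖) (x y : H) :
    ⟪V x, V y⟫ = ⟪x, y⟫ :=
  LinearIsometry.inner_map_map ⟨(V : H →ₗ[ℂ] H), h⟩ x y

lemma aux_adj_apply {V : H →L[ℂ] H} (h : ∀ x, ‖V x‖ = ‖x‖) (x : H) :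
    adjoint V (V x) = x := by
  apply ext_inner_right ℂ
  intro v
  rw [adjoint_inner_left, aux_inner_map h]

lemma aux_adj_norm_le {V : H →L[ℂ] H} (h : ∀ x, ‖V x‖ = ‖x‖) (y : H) :
    ‖adjoint V y‖ ≤ ‖y‖ := by
  set a := adjoint V y with ha
  have h1 : ⟪a, a⟫ = ⟪y, V a⟫ := adjoint_inner_left V a y
  have h2 : ‖a‖ ^ 2 ≤ ‖y‖ * ‖a‖ := by
    rw [← inner_self_eq_norm_sq (𝕜 := ℂ) a, h1]
    calc RCLike.re (⟪y, V a⟫) ≤ ‖⟪y, V a⟫‖ :=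
          le_trans (le_abs_self _) (RCLike.abs_re_le_norm _)
    _ ≤ ‖y‖ * ‖V a‖ := norm_inner_le_norm _ _
    _ = ‖y‖ * ‖a‖ := by rw [h a]
  nlinarith [norm_nonneg a, norm_nonneg y]

lemma aux_normal_norm {N : H →L[ℂ] H} (h : N ∘L adjoint N = adjoint N ∘L N) (x : H) :
    ‖adjoint N x‖ = ‖N x‖ := by
  have hcomm : N (adjoint N x) = adjoint N (N x) := by
    have := ContinuousLinearMap.ext_iff.mp h x
    simpa [comp_apply] using this
  have h1 : ⟪adjoint N x, adjoint N x⟫ = ⟪N x, N x⟫ := by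
    rw [adjoint_inner_left, hcomm, adjoint_inner_right]
  have h2 : ‖adjoint N x‖ ^ 2 = ‖N x‖ ^ 2 := by
    rw [← inner_self_eq_norm_sq (𝕜 := ℂ), ← inner_self_eq_norm_sq (𝕜 := ℂ), h1]
  have := congrArg Real.sqrt h2
  rwa [Real.sqrt_sq (norm_nonneg _), Real.sqrt_sq (norm_nonneg _)] at this

set_option maxHeartbeats 1000000 in
/-- Membership in `E₁ = ker (C - I)` forces `V₁* u = 0` and `V₂* u = 0`. -/
lemma aux_ker_defect {V₁ V₂ : H →L[ℂ] H}
    (hi1 : ∀ x, ‖V₁ x‖ = ‖x‖) (hi2 : ∀ x, ‖V₂ x‖ = ‖x‖)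
    (hadjcomm : ∀ x, adjoint V₁ (adjoint V₂ x) = adjoint V₂ (adjoint V₁ x))
    {u : H} (hu : u ∈ LinearMap.ker ((defectOp V₁ V₂ - 1 : H →L[ℂ] H) : H →ₗ[ℂ] H)) :
    adjoint V₁ u = 0 ∧ adjoint V₂ u = 0 := by
  have hu0 : (defectOp V₁ V₂ - 1) u = 0 := LinearMap.mem_ker.mp hu
  have hu1 : defectOp V₁ V₂ u = u := by
    have := hu0
    rw [sub_apply, one_apply_eq_self, sub_eq_zero] at this
    exact this
  have hd : u - V₁ (adjoint V₁ u) - V₂ (adjoint V₂ u)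
      + V₁ (V₂ (adjoint V₁ (adjoint V₂ u))) = u := by
    simpa [defectOp, sub_apply, add_apply, one_apply_eq_self, comp_apply] using hu1
  set A := V₁ (adjoint V₁ u)
  set B := V₂ (adjoint V₂ u)
  set Cc := V₁ (V₂ (adjoint V₁ (adjoint V₂ u)))
  have hsum : A + B = Cc := by
    have : A + B = u - (u - A - B + Cc) + Cc := by abel
    rw [hd] at this
    simpa using this
  have hip := congrArg (fun w => ⟪u, w⟫) hsum
  simp only [inner_add_right] at hip
  have e1 : ⟪u, A⟫ = ⟪adjoint V₁ u, adjoint V₁ u⟫ := (adjoint_inner_left V₁ _ u).symm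
  have e2 : ⟪u, B⟫ = ⟪adjoint V₂ u, adjoint V₂ u⟫ := (adjoint_inner_left V₂ _ u).symm
  have e3 : ⟪u, Cc⟫ = ⟪adjoint V₁ (adjoint V₂ u), adjoint V₁ (adjoint V₂ u)⟫ := by
    show ⟪u, V₁ (V₂ (adjoint V₁ (adjoint V₂ u)))⟫ = _
    rw [← adjoint_inner_left, ← adjoint_inner_left, hadjcomm]
  rw [e1, e2, e3] at hip
  rw [inner_self_eq_norm_sq_to_K, inner_self_eq_norm_sq_to_K,
    inner_self_eq_norm_sq_to_K] at hip
  have hreal : ‖adjoint V₁ u‖ ^ 2 + ‖adjoint V₂ u‖ ^ 2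
      = ‖adjoint V₁ (adjoint V₂ u)‖ ^ 2 := by exact_mod_cast hip
  have hb1 : ‖adjoint V₁ (adjoint V₂ u)‖ ≤ ‖adjoint V₂ u‖ := aux_adj_norm_le hi1 _
  have hb2 : ‖adjoint V₁ (adjoint V₂ u)‖ ≤ ‖adjoint V₁ u‖ := by
    rw [hadjcomm]
    exact aux_adj_norm_le hi2 _
  obtain ⟨s, hs⟩ : ∃ s, s = ‖adjoint V₁ u‖ := ⟨_, rfl⟩
  obtain ⟨t, ht⟩ : ∃ t, t = ‖adjoint V₂ u‖ := ⟨_, rfl⟩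
  obtain ⟨w, hw⟩ : ∃ w, w = ‖adjoint V₁ (adjoint V₂ u)‖ := ⟨_, rfl⟩
  rw [← hs, ← ht, ← hw] at hreal
  rw [← ht, ← hw] at hb1
  rw [← hs, ← hw] at hb2
  have hs0 : 0 ≤ s := hs ▸ norm_nonneg _
  have ht0 : 0 ≤ t := ht ▸ norm_nonneg _
  have hw0 : 0 ≤ w := hw ▸ norm_nonneg _
  have hwt : w ^ 2 ≤ t ^ 2 := pow_le_pow_left₀ hw0 hb1 2
  have hws : w ^ 2 ≤ s ^ 2 := pow_le_pow_left₀ hw0 hb2 2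
  have hn1 : s = 0 := by
    have h2 : s ^ 2 = 0 := le_antisymm (by linarith) (sq_nonneg s)
    exact pow_eq_zero_iff two_ne_zero |>.mp h2
  have hn2 : t = 0 := by
    have hwz : w = 0 := le_antisymm (by rw [hn1] at hb2; exact hb2) hw0
    have h2 : t ^ 2 = 0 := by rw [hn1, hwz] at hreal; simpa using hreal
    exact pow_eq_zero_iff two_ne_zero |>.mp h2
  constructor
  · rw [← norm_eq_zero, ← hs]; exact hn1
  · rw [← norm_eq_zero, ← ht]; exact hn2

end Aux

local notation "⟪" x ", " y "⟫" => @inner ℂ _ _ x y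

set_option maxHeartbeats 1000000

/-- For a compact normal pair and orthogonal eigenvectors
`f, g ∈ E₁` of the cross-commutator, `⟨V₂^m f, V₁^n g⟩ = 0` for all `m, n ≥ 0`, and the
generated closed subspaces `H_f` and `H_g` are orthogonal. -/
theorem stmt_18 {H : Type*} [NormedAddCommGroup H] [InnerProductSpace ℂ H] [CompleteSpace H]
    (V₁ V₂ : H →L[ℂ] H)
    (hcnp : IsCompactNormalPair V₁ V₂)
    (f g : H)
    (hf : f ∈ LinearMap.ker ((defectOp V₁ V₂ - 1 : H →L[ℂ] H) : H →ₗ[ℂ] H))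
    (hg : g ∈ LinearMap.ker ((defectOp V₁ V₂ - 1 : H →L[ℂ] H) : H →ₗ[ℂ] H))
    (hortho : (inner ℂ f g : ℂ) = 0)
    (hf0 : f ≠ 0) (hg0 : g ≠ 0)
    (heigf : ∃ μ : ℂ, crossComm V₁ V₂ f = μ • f)
    (heigg : ∃ ν : ℂ, crossComm V₁ V₂ g = ν • g) :
    (∀ m n : ℕ, (inner ℂ ((V₂ ^ m) f) ((V₁ ^ n) g) : ℂ) = 0) ∧
      ∀ x ∈ (Submodule.span ℂ
          (Set.range fun p : ℕ × ℕ => (V₁ ^ p.1) ((V₂ ^ p.2) f))).topologicalClosure,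
        ∀ y ∈ (Submodule.span ℂ
          (Set.range fun p : ℕ × ℕ => (V₁ ^ p.1) ((V₂ ^ p.2) g))).topologicalClosure,
        (inner ℂ x y : ℂ) = 0 := by
  obtain ⟨⟨⟨hi1, hi2, hcomm⟩, _⟩, _, hnormal⟩ := hcnp
  obtain ⟨ν, hν⟩ := heigg
  set T := crossComm V₁ V₂ with hTdef
  -- pointwise commutation facts
  have hc : ∀ x, V₁ (V₂ x) = V₂ (V₁ x) := fun x => by
    have := ContinuousLinearMap.ext_iff.mp hcomm x
    simpa [comp_apply] using this
  have hac : adjoint V₂ ∘L adjoint V₁ = adjoint V₁ ∘L adjoint V₂ := by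
    have := congrArg (fun A => adjoint A) hcomm
    simpa only [adjoint_comp] using this
  have hadjcomm : ∀ x, adjoint V₁ (adjoint V₂ x) = adjoint V₂ (adjoint V₁ x) := fun x => by
    have := ContinuousLinearMap.ext_iff.mp hac x
    simpa [comp_apply] using this.symm
  have hA1 : ∀ x, adjoint V₁ (V₁ x) = x := aux_adj_apply hi1
  have hA2 : ∀ x, adjoint V₂ (V₂ x) = x := aux_adj_apply hi2
  -- E₁ facts
  obtain ⟨hV₁f, hV₂f⟩ := aux_ker_defect hi1 hi2 hadjcomm hf
  obtain ⟨hV₁g, hV₂g⟩ := aux_ker_defect hi1 hi2 hadjcomm hg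
  -- cross-commutator pointwise formulas
  have hTapp : ∀ x, T x = adjoint V₂ (V₁ x) - V₁ (adjoint V₂ x) := fun x => by
    rw [hTdef]; simp [crossComm, sub_apply, comp_apply]
  have hadjT : adjoint T = adjoint V₁ ∘L V₂ - V₂ ∘L adjoint V₁ := by
    rw [hTdef]
    unfold crossComm
    rw [map_sub, adjoint_comp, adjoint_comp, adjoint_adjoint]
  have hT'app : ∀ x, adjoint T x = adjoint V₁ (V₂ x) - V₂ (adjoint V₁ x) := fun x => by
    rw [hadjT]; simp [sub_apply, comp_apply]
  -- normality consequences
  have hadjS : adjoint (T - ν • 1) = adjoint T - (starRingEnd ℂ ν) • 1 := by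
    rw [← star_eq_adjoint, ← star_eq_adjoint, star_sub, star_smul, star_one, starRingEnd_apply]
  have hn' : T * adjoint T = adjoint T * T := by
    rw [mul_def, mul_def]; exact hnormal
  have hSnormal : (T - ν • 1) ∘L adjoint (T - ν • 1) = adjoint (T - ν • 1) ∘L (T - ν • 1) := by
    rw [hadjS, ← mul_def, ← mul_def]
    simp only [sub_mul, mul_sub, smul_mul_assoc, mul_smul_comm, one_mul, mul_one, smul_smul]
    rw [hn']
    module
  have hT'g : adjoint T g = (starRingEnd ℂ ν) • g := by
    have h0 : (T - ν • 1) g = 0 := by rw [sub_apply, smul_apply, one_apply_eq_self, hν, sub_self]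
    have h1 := aux_normal_norm hSnormal g
    rw [h0, norm_zero, norm_eq_zero] at h1
    rw [hadjS, sub_apply, smul_apply, one_apply_eq_self, sub_eq_zero] at h1
    exact h1
  -- vanishing of T and T* on ranges
  have hTV₂ : ∀ x, T (V₂ x) = 0 := fun x => by
    rw [hTapp, hc x, hA2, hA2, sub_self]
  have hT'V₁ : ∀ x, adjoint T (V₁ x) = 0 := fun x => by
    rw [hT'app, ← hc x, hA1, hA1, sub_self]
  have hTV₁ : ∀ x, T (V₁ x) = 0 := fun x => by
    have h1 := aux_normal_norm hnormal (V₁ x)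
    rw [hT'V₁ x, norm_zero] at h1
    exact norm_eq_zero.mp h1.symm
  have hT'V₂ : ∀ x, adjoint T (V₂ x) = 0 := fun x => by
    have h1 := aux_normal_norm hnormal (V₂ x)
    rw [hTV₂ x, norm_zero] at h1
    exact norm_eq_zero.mp h1
  -- power application lemmas
  have hpow1 : ∀ (n : ℕ) (x : H), (V₁ ^ (n + 1)) x = V₁ ((V₁ ^ n) x) := fun n x => by
    rw [pow_succ', mul_apply_eq_comp]
  have hpow2 : ∀ (n : ℕ) (x : H), (V₂ ^ (n + 1)) x = V₂ ((V₂ ^ n) x) := fun n x => by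
    rw [pow_succ', mul_apply_eq_comp]
  -- key recursions
  have hA : ∀ n : ℕ, adjoint V₂ ((V₁ ^ (n + 1)) g) = ν • ((V₁ ^ n) g) := by
    intro n
    induction n with
    | zero =>
      rw [hpow1, pow_zero, one_apply_eq_self]
      have e := hTapp g
      rw [hV₂g, map_zero, sub_zero] at e
      rw [← e, hν]
    | succ n ih =>
      rw [hpow1 (n + 1)]
      have e := hTapp ((V₁ ^ (n + 1)) g)
      rw [show T ((V₁ ^ (n + 1)) g) = 0 from by rw [hpow1]; exact hTV₁ _] at e
      have e2 : adjoint V₂ (V₁ ((V₁ ^ (n + 1)) g)) = V₁ (adjoint V₂ ((V₁ ^ (n + 1)) g)) :=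
        sub_eq_zero.mp e.symm
      rw [e2, ih, map_smul, ← hpow1]
  have hB : ∀ n : ℕ, adjoint V₁ ((V₂ ^ (n + 1)) g) = (starRingEnd ℂ ν) • ((V₂ ^ n) g) := by
    intro n
    induction n with
    | zero =>
      rw [hpow2, pow_zero, one_apply_eq_self]
      have e := hT'app g
      rw [hV₁g, map_zero, sub_zero] at e
      rw [← e, hT'g]
    | succ n ih =>
      rw [hpow2 (n + 1)]
      have e := hT'app ((V₂ ^ (n + 1)) g)
      rw [show adjoint T ((V₂ ^ (n + 1)) g) = 0 from by rw [hpow2]; exact hT'V₂ _] at e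
      have e2 : adjoint V₁ (V₂ ((V₂ ^ (n + 1)) g)) = V₂ (adjoint V₁ ((V₂ ^ (n + 1)) g)) :=
        sub_eq_zero.mp e.symm
      rw [e2, ih, map_smul, ← hpow2]
  -- part 1
  have P1 : ∀ m n : ℕ, ⟪(V₂ ^ m) f, (V₁ ^ n) g⟫ = 0 := by
    intro m
    induction m with
    | zero =>
      intro n
      cases n with
      | zero => simpa using hortho
      | succ n => rw [pow_zero, one_apply_eq_self, hpow1, ← adjoint_inner_left, hV₁f, inner_zero_left]
    | succ m ih =>
      intro n
      cases n with
      | zero => rw [pow_zero, one_apply_eq_self, hpow2, ← adjoint_inner_right, hV₂g, inner_zero_right]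
      | succ n => rw [hpow2, ← adjoint_inner_right, hA n, inner_smul_right, ih n, mul_zero]
  have Q1 : ∀ m n : ℕ, ⟪(V₁ ^ m) f, (V₂ ^ n) g⟫ = 0 := by
    intro m
    induction m with
    | zero =>
      intro n
      cases n with
      | zero => simpa using hortho
      | succ n => rw [pow_zero, one_apply_eq_self, hpow2, ← adjoint_inner_left, hV₂f, inner_zero_left]
    | succ m ih =>
      intro n
      cases n with
      | zero => rw [pow_zero, one_apply_eq_self, hpow1, ← adjoint_inner_right, hV₁g, inner_zero_right]
      | succ n => rw [hpow1, ← adjoint_inner_right, hB n, inner_smul_right, ih n, mul_zero]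
  have baseII : ∀ c d : ℕ, ⟪f, (V₁ ^ c) ((V₂ ^ d) g)⟫ = 0 := by
    intro c d
    cases c with
    | zero =>
      rw [pow_zero, one_apply_eq_self]
      have := Q1 0 d
      rwa [pow_zero, one_apply_eq_self] at this
    | succ c => rw [hpow1, ← adjoint_inner_left, hV₁f, inner_zero_left]
  have baseIII : ∀ a b : ℕ, ⟪(V₁ ^ a) ((V₂ ^ b) f), g⟫ = 0 := by
    intro a b
    cases a with
    | zero =>
      rw [pow_zero, one_apply_eq_self]
      have := P1 b 0
      rwa [pow_zero, one_apply_eq_self] at this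
    | succ a => rw [hpow1, ← adjoint_inner_right, hV₁g, inner_zero_right]
  -- cancellation lemmas
  have cancel1 : ∀ (k : ℕ) (x y : H), ⟪(V₁ ^ k) x, (V₁ ^ k) y⟫ = ⟪x, y⟫ := by
    intro k
    induction k with
    | zero => intro x y; rw [pow_zero, one_apply_eq_self, one_apply_eq_self]
    | succ k ih => intro x y; rw [hpow1, hpow1, aux_inner_map hi1, ih]
  have cancel2 : ∀ (k : ℕ) (x y : H), ⟪(V₂ ^ k) x, (V₂ ^ k) y⟫ = ⟪x, y⟫ := by
    intro k
    induction k with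
    | zero => intro x y; rw [pow_zero, one_apply_eq_self, one_apply_eq_self]
    | succ k ih => intro x y; rw [hpow2, hpow2, aux_inner_map hi2, ih]
  have hpc : ∀ (a : ℕ) (x : H), (V₁ ^ a) (V₂ x) = V₂ ((V₁ ^ a) x) := by
    intro a
    induction a with
    | zero => intro x; rw [pow_zero, one_apply_eq_self, one_apply_eq_self]
    | succ a ih => intro x; rw [hpow1, ih, hc, hpow1]
  have hpc2 : ∀ (a d : ℕ) (x : H), (V₁ ^ a) ((V₂ ^ d) x) = (V₂ ^ d) ((V₁ ^ a) x) := by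
    intro a d
    induction d with
    | zero => intro x; rw [pow_zero, one_apply_eq_self, one_apply_eq_self]
    | succ d ih => intro x; rw [hpow2, hpc, ih, hpow2]
  -- the general orthogonality
  have R : ∀ a b c d : ℕ, ⟪(V₁ ^ a) ((V₂ ^ b) f), (V₁ ^ c) ((V₂ ^ d) g)⟫ = 0 := by
    intro a b c d
    rcases le_total a c with h | h
    · obtain ⟨e, rfl⟩ := Nat.exists_eq_add_of_le h
      rw [pow_add, mul_apply_eq_comp, cancel1]
      rcases le_total b d with h' | h'
      · obtain ⟨e', rfl⟩ := Nat.exists_eq_add_of_le h'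
        rw [pow_add, mul_apply_eq_comp, hpc2, cancel2]
        exact baseII e e'
      · obtain ⟨e', rfl⟩ := Nat.exists_eq_add_of_le h'
        rw [pow_add, mul_apply_eq_comp, hpc2, cancel2]
        exact P1 e' e
    · obtain ⟨e, rfl⟩ := Nat.exists_eq_add_of_le h
      rw [pow_add, mul_apply_eq_comp, cancel1]
      rcases le_total b d with h' | h'
      · obtain ⟨e', rfl⟩ := Nat.exists_eq_add_of_le h'
        rw [pow_add, mul_apply_eq_comp, hpc2, cancel2]
        exact Q1 e e'
      · obtain ⟨e', rfl⟩ := Nat.exists_eq_add_of_le h'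
        rw [pow_add, mul_apply_eq_comp, hpc2, cancel2]
        exact baseIII e e'
  refine ⟨P1, ?_⟩
  intro x hx y hy
  set Sf := Submodule.span ℂ (Set.range fun p : ℕ × ℕ => (V₁ ^ p.1) ((V₂ ^ p.2) f)) with hSfdef
  set Sg := Submodule.span ℂ (Set.range fun p : ℕ × ℕ => (V₁ ^ p.1) ((V₂ ^ p.2) g)) with hSgdef
  have hSgle : Sg ≤ Sfᗮ := by
    rw [hSgdef]
    apply Submodule.span_le.mpr
    rintro w ⟨⟨cc, dd⟩, rfl⟩
    rw [SetLike.mem_coe, Submodule.mem_orthogonal]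
    intro u hu
    induction hu using Submodule.span_induction with
    | mem v hv =>
      obtain ⟨⟨aa, bb⟩, rfl⟩ := hv
      exact R aa bb cc dd
    | zero => exact inner_zero_left _
    | add v w' hv hw' ih1 ih2 => rw [inner_add_left, ih1, ih2, add_zero]
    | smul c v hv ih => rw [inner_smul_left, ih, mul_zero]
  have hSgc : Sg.topologicalClosure ≤ Sfᗮ :=
    Submodule.topologicalClosure_minimal _ hSgle Sf.isClosed_orthogonal
  have hSfle : Sf ≤ (Sg.topologicalClosure)ᗮ := by
    intro u hu
    rw [Submodule.mem_orthogonal]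
    intro v hv
    have h1 := (Submodule.mem_orthogonal Sf v).mp (hSgc hv) u hu
    exact inner_eq_zero_symm.mp h1
  have hSfc : Sf.topologicalClosure ≤ (Sg.topologicalClosure)ᗮ :=
    Submodule.topologicalClosure_minimal _ hSfle (Submodule.isClosed_orthogonal _)
  have hx' := hSfc hx
  have hfin := (Submodule.mem_orthogonal _ x).mp hx' y hy
  exact inner_eq_zero_symm.mp hfin
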